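/- arXiv:2602.08137 — 5 statements merged into one kernel-verified Lean document; each statement's English description precedes it below -/
import Mathlib

section
/- Let P be symmetric n×n, X symmetric positive definite n_p×n_p, V an invertible n×n matrix, M an n_u×n matrix, and set F := M·V⁻¹. Then the 5×5 block matrix LMI(P,X,V,M) equals Tᵀ·N·T, where T := diag(V, X, I_n, I_{n_p}, I_{n_e}) and N is the symmetric 5×5 block matrix [[V⁻ᵀ(V+Vᵀ−P)V⁻¹, 0, (A+B2·F)ᵀ, (C0+D02·F)ᵀ, (C1+D12·F)ᵀ],[0, X⁻¹, B0ᵀ, D00ᵀ, D10ᵀ],[A+B2·F, B0, P, 0, 0],[C0+D02·F, D00, 0, X, 0],[C1+D12·F, D10, 0, 0, I_{n_e}]]. Consequently LMI(P,X,V,M) is positive definite if and only if N is positive definite. -/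
/-!
`LMI(P, X, V, M)` is the congruence `Tᵀ N T` of `N` by the block-diagonal matrix
`T = diag(V, X, I, I, I)`: congruence by a block-diagonal matrix replaces block `(i, j)` by
`Tᵢᵀ Nᵢⱼ Tⱼ`, and with `F V = M` and `Xᵀ = X` these are exactly the blocks of the LMI.
Since `V` and `X` are invertible so is `T`, and congruence by an invertible matrix preserves
positive definiteness.
-/

open Matrix

/-- Concatenation of five column blocks. -/
def col5 {m c1 c2 c3 c4 c5 : Type*}
    (M1 : Matrix m c1 ℝ) (M2 : Matrix m c2 ℝ) (M3 : Matrix m c3 ℝ)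
    (M4 : Matrix m c4 ℝ) (M5 : Matrix m c5 ℝ) :
    Matrix m (((c1 ⊕ c2) ⊕ (c3 ⊕ c4)) ⊕ c5) ℝ :=
  fromCols (fromCols (fromCols M1 M2) (fromCols M3 M4)) M5

/-- A `5 × 5` block matrix assembled from its twenty-five blocks. -/
def blk55 {r1 r2 r3 r4 r5 c1 c2 c3 c4 c5 : Type*}
    (M11 : Matrix r1 c1 ℝ) (M12 : Matrix r1 c2 ℝ) (M13 : Matrix r1 c3 ℝ)
    (M14 : Matrix r1 c4 ℝ) (M15 : Matrix r1 c5 ℝ)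
    (M21 : Matrix r2 c1 ℝ) (M22 : Matrix r2 c2 ℝ) (M23 : Matrix r2 c3 ℝ)
    (M24 : Matrix r2 c4 ℝ) (M25 : Matrix r2 c5 ℝ)
    (M31 : Matrix r3 c1 ℝ) (M32 : Matrix r3 c2 ℝ) (M33 : Matrix r3 c3 ℝ)
    (M34 : Matrix r3 c4 ℝ) (M35 : Matrix r3 c5 ℝ)
    (M41 : Matrix r4 c1 ℝ) (M42 : Matrix r4 c2 ℝ) (M43 : Matrix r4 c3 ℝ)
    (M44 : Matrix r4 c4 ℝ) (M45 : Matrix r4 c5 ℝ)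
    (M51 : Matrix r5 c1 ℝ) (M52 : Matrix r5 c2 ℝ) (M53 : Matrix r5 c3 ℝ)
    (M54 : Matrix r5 c4 ℝ) (M55 : Matrix r5 c5 ℝ) :
    Matrix (((r1 ⊕ r2) ⊕ (r3 ⊕ r4)) ⊕ r5) (((c1 ⊕ c2) ⊕ (c3 ⊕ c4)) ⊕ c5) ℝ :=
  fromRows
    (fromRows (fromRows (col5 M11 M12 M13 M14 M15) (col5 M21 M22 M23 M24 M25))
      (fromRows (col5 M31 M32 M33 M34 M35) (col5 M41 M42 M43 M44 M45)))
    (col5 M51 M52 M53 M54 M55)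

/-- The `5 × 5` block LMI matrix `LMI(P, X, V, M)` of the robust `H₂` state-feedback
synthesis (Theorem 1), for the plant data `A, B0, B2, C0, D00, D02, C1, D10, D12`. -/
def LMIsf {n np ne nu : ℕ}
    (A : Matrix (Fin n) (Fin n) ℝ) (B0 : Matrix (Fin n) (Fin np) ℝ)
    (B2 : Matrix (Fin n) (Fin nu) ℝ) (C0 : Matrix (Fin np) (Fin n) ℝ)
    (D00 : Matrix (Fin np) (Fin np) ℝ) (D02 : Matrix (Fin np) (Fin nu) ℝ)
    (C1 : Matrix (Fin ne) (Fin n) ℝ) (D10 : Matrix (Fin ne) (Fin np) ℝ)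
    (D12 : Matrix (Fin ne) (Fin nu) ℝ)
    (P : Matrix (Fin n) (Fin n) ℝ) (X : Matrix (Fin np) (Fin np) ℝ)
    (V : Matrix (Fin n) (Fin n) ℝ) (M : Matrix (Fin nu) (Fin n) ℝ) :
    Matrix (((Fin n ⊕ Fin np) ⊕ (Fin n ⊕ Fin np)) ⊕ Fin ne)
      (((Fin n ⊕ Fin np) ⊕ (Fin n ⊕ Fin np)) ⊕ Fin ne) ℝ :=
  blk55
    (Vᵀ + V - P) 0 (A * V + B2 * M)ᵀ (C0 * V + D02 * M)ᵀ (C1 * V + D12 * M)ᵀ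
    0 X (X * B0ᵀ) (X * D00ᵀ) (X * D10ᵀ)
    (A * V + B2 * M) (B0 * X) P 0 0
    (C0 * V + D02 * M) (D00 * X) 0 X 0
    (C1 * V + D12 * M) (D10 * X) 0 0 (1 : Matrix (Fin ne) (Fin ne) ℝ)

lemma fromCols_add_fromCols {R m n₁ n₂ : Type*} [Add R] (A₁ B₁ : Matrix m n₁ R)
    (A₂ B₂ : Matrix m n₂ R) :
    fromCols A₁ A₂ + fromCols B₁ B₂ = fromCols (A₁ + B₁) (A₂ + B₂) := by
  ext i (j | j) <;> rfl

section BlockDiagonal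

variable {r1 r2 r3 r4 r5 c1 c2 c3 c4 c5 : Type*}

def blk55Diag (T1 : Matrix r1 c1 ℝ) (T2 : Matrix r2 c2 ℝ) (T3 : Matrix r3 c3 ℝ)
    (T4 : Matrix r4 c4 ℝ) (T5 : Matrix r5 c5 ℝ) :
    Matrix (((r1 ⊕ r2) ⊕ (r3 ⊕ r4)) ⊕ r5) (((c1 ⊕ c2) ⊕ (c3 ⊕ c4)) ⊕ c5) ℝ :=
  blk55 T1 0 0 0 0 0 T2 0 0 0 0 0 T3 0 0 0 0 0 T4 0 0 0 0 0 T5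

lemma blk55Diag_transpose (T1 : Matrix r1 c1 ℝ) (T2 : Matrix r2 c2 ℝ) (T3 : Matrix r3 c3 ℝ)
    (T4 : Matrix r4 c4 ℝ) (T5 : Matrix r5 c5 ℝ) :
    (blk55Diag T1 T2 T3 T4 T5)ᵀ = blk55Diag T1ᵀ T2ᵀ T3ᵀ T4ᵀ T5ᵀ := by
  ext (((i | i) | (i | i)) | i) (((j | j) | (j | j)) | j) <;> simp [blk55Diag, blk55, col5]

variable [Fintype r1] [Fintype r2] [Fintype r3] [Fintype r4] [Fintype r5]

lemma blk55Diag_transpose_mul_blk55_mul_blk55Diag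
    (T1 : Matrix r1 c1 ℝ) (T2 : Matrix r2 c2 ℝ) (T3 : Matrix r3 c3 ℝ)
    (T4 : Matrix r4 c4 ℝ) (T5 : Matrix r5 c5 ℝ)
    (N11 : Matrix r1 r1 ℝ) (N12 : Matrix r1 r2 ℝ) (N13 : Matrix r1 r3 ℝ)
    (N14 : Matrix r1 r4 ℝ) (N15 : Matrix r1 r5 ℝ)
    (N21 : Matrix r2 r1 ℝ) (N22 : Matrix r2 r2 ℝ) (N23 : Matrix r2 r3 ℝ)
    (N24 : Matrix r2 r4 ℝ) (N25 : Matrix r2 r5 ℝ)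
    (N31 : Matrix r3 r1 ℝ) (N32 : Matrix r3 r2 ℝ) (N33 : Matrix r3 r3 ℝ)
    (N34 : Matrix r3 r4 ℝ) (N35 : Matrix r3 r5 ℝ)
    (N41 : Matrix r4 r1 ℝ) (N42 : Matrix r4 r2 ℝ) (N43 : Matrix r4 r3 ℝ)
    (N44 : Matrix r4 r4 ℝ) (N45 : Matrix r4 r5 ℝ)
    (N51 : Matrix r5 r1 ℝ) (N52 : Matrix r5 r2 ℝ) (N53 : Matrix r5 r3 ℝ)
    (N54 : Matrix r5 r4 ℝ) (N55 : Matrix r5 r5 ℝ) :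
    (blk55Diag T1 T2 T3 T4 T5)ᵀ *
        blk55 N11 N12 N13 N14 N15 N21 N22 N23 N24 N25 N31 N32 N33 N34 N35
          N41 N42 N43 N44 N45 N51 N52 N53 N54 N55 *
        blk55Diag T1 T2 T3 T4 T5 =
      blk55
        (T1ᵀ * N11 * T1) (T1ᵀ * N12 * T2) (T1ᵀ * N13 * T3) (T1ᵀ * N14 * T4) (T1ᵀ * N15 * T5)
        (T2ᵀ * N21 * T1) (T2ᵀ * N22 * T2) (T2ᵀ * N23 * T3) (T2ᵀ * N24 * T4) (T2ᵀ * N25 * T5)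
        (T3ᵀ * N31 * T1) (T3ᵀ * N32 * T2) (T3ᵀ * N33 * T3) (T3ᵀ * N34 * T4) (T3ᵀ * N35 * T5)
        (T4ᵀ * N41 * T1) (T4ᵀ * N42 * T2) (T4ᵀ * N43 * T3) (T4ᵀ * N44 * T4) (T4ᵀ * N45 * T5)
        (T5ᵀ * N51 * T1) (T5ᵀ * N52 * T2) (T5ᵀ * N53 * T3) (T5ᵀ * N54 * T4) (T5ᵀ * N55 * T5) := by
  rw [blk55Diag_transpose]
  simp only [blk55Diag, blk55, col5, fromRows_mul, fromCols_mul_fromRows, mul_fromCols,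
    fromCols_add_fromCols, Matrix.mul_zero, Matrix.zero_mul, add_zero, zero_add]

lemma blk55Diag_mul_blk55Diag {k1 k2 k3 k4 k5 : Type*}
    (S1 : Matrix k1 r1 ℝ) (S2 : Matrix k2 r2 ℝ) (S3 : Matrix k3 r3 ℝ)
    (S4 : Matrix k4 r4 ℝ) (S5 : Matrix k5 r5 ℝ)
    (T1 : Matrix r1 c1 ℝ) (T2 : Matrix r2 c2 ℝ) (T3 : Matrix r3 c3 ℝ)
    (T4 : Matrix r4 c4 ℝ) (T5 : Matrix r5 c5 ℝ) :
    blk55Diag S1 S2 S3 S4 S5 * blk55Diag T1 T2 T3 T4 T5 =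
      blk55Diag (S1 * T1) (S2 * T2) (S3 * T3) (S4 * T4) (S5 * T5) := by
  simp only [blk55Diag, blk55, col5, fromRows_mul, fromCols_mul_fromRows, mul_fromCols,
    Matrix.mul_zero, Matrix.zero_mul, add_zero, zero_add]

end BlockDiagonal

lemma blk55Diag_one {k1 k2 k3 k4 k5 : Type*} [DecidableEq k1] [DecidableEq k2] [DecidableEq k3]
    [DecidableEq k4] [DecidableEq k5] :
    blk55Diag (1 : Matrix k1 k1 ℝ) (1 : Matrix k2 k2 ℝ) (1 : Matrix k3 k3 ℝ)
      (1 : Matrix k4 k4 ℝ) (1 : Matrix k5 k5 ℝ) = 1 := by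
  ext (((i | i) | (i | i)) | i) (((j | j) | (j | j)) | j) <;>
    simp [blk55Diag, blk55, col5, one_apply]

lemma isUnit_blk55Diag {k1 k2 k3 k4 k5 : Type*} [Fintype k1] [Fintype k2] [Fintype k3]
    [Fintype k4] [Fintype k5] [DecidableEq k1] [DecidableEq k2] [DecidableEq k3]
    [DecidableEq k4] [DecidableEq k5] {T1 : Matrix k1 k1 ℝ} {T2 : Matrix k2 k2 ℝ}
    {T3 : Matrix k3 k3 ℝ} {T4 : Matrix k4 k4 ℝ} {T5 : Matrix k5 k5 ℝ}
    (h1 : IsUnit T1) (h2 : IsUnit T2) (h3 : IsUnit T3) (h4 : IsUnit T4) (h5 : IsUnit T5) :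
    IsUnit (blk55Diag T1 T2 T3 T4 T5) := by
  obtain ⟨u1, rfl⟩ := h1
  obtain ⟨u2, rfl⟩ := h2
  obtain ⟨u3, rfl⟩ := h3
  obtain ⟨u4, rfl⟩ := h4
  obtain ⟨u5, rfl⟩ := h5
  refine ⟨⟨blk55Diag u1 u2 u3 u4 u5, blk55Diag ↑u1⁻¹ ↑u2⁻¹ ↑u3⁻¹ ↑u4⁻¹ ↑u5⁻¹, ?_, ?_⟩, rfl⟩ <;>
    simp only [blk55Diag_mul_blk55Diag, Units.mul_inv, Units.inv_mul, blk55Diag_one]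

lemma add_mul_mul_nonsing_inv_mul {R k m l : Type*} [CommRing R] [Fintype k] [DecidableEq k]
    [Fintype l] (C : Matrix m k R) (D : Matrix m l R) (M : Matrix l k R) {V : Matrix k k R}
    (hV : IsUnit V) :
    (C + D * (M * V⁻¹)) * V = C * V + D * M := by
  rw [Matrix.add_mul, Matrix.mul_assoc, Matrix.mul_assoc,
    nonsing_inv_mul _ ((isUnit_iff_isUnit_det V).mp hV), Matrix.mul_one]

lemma posDef_transpose_mul_mul_iff {k : Type*} [Fintype k] [DecidableEq k] {N T : Matrix k k ℝ}
    (hT : IsUnit T) : (Tᵀ * N * T).PosDef ↔ N.PosDef := by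
  simpa only [star_eq_conjTranspose, conjTranspose_eq_transpose_of_trivial]
    using hT.posDef_star_left_conjugate_iff

theorem statement3_general {n np ne nu : ℕ}
    (A : Matrix (Fin n) (Fin n) ℝ) (B0 : Matrix (Fin n) (Fin np) ℝ)
    (B2 : Matrix (Fin n) (Fin nu) ℝ) (C0 : Matrix (Fin np) (Fin n) ℝ)
    (D00 : Matrix (Fin np) (Fin np) ℝ) (D02 : Matrix (Fin np) (Fin nu) ℝ)
    (C1 : Matrix (Fin ne) (Fin n) ℝ) (D10 : Matrix (Fin ne) (Fin np) ℝ)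
    (D12 : Matrix (Fin ne) (Fin nu) ℝ)
    (P : Matrix (Fin n) (Fin n) ℝ) (X : Matrix (Fin np) (Fin np) ℝ)
    (V : Matrix (Fin n) (Fin n) ℝ) (M : Matrix (Fin nu) (Fin n) ℝ)
    (hX : X.PosDef) (hV : IsUnit V) :
    LMIsf A B0 B2 C0 D00 D02 C1 D10 D12 P X V M =
      (blk55 V 0 0 0 0
        0 X 0 0 0
        0 0 (1 : Matrix (Fin n) (Fin n) ℝ) 0 0
        0 0 0 (1 : Matrix (Fin np) (Fin np) ℝ) 0
        0 0 0 0 (1 : Matrix (Fin ne) (Fin ne) ℝ))ᵀ *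
      (blk55
        ((V⁻¹)ᵀ * (V + Vᵀ - P) * V⁻¹) 0 (A + B2 * (M * V⁻¹))ᵀ (C0 + D02 * (M * V⁻¹))ᵀ
          (C1 + D12 * (M * V⁻¹))ᵀ
        0 X⁻¹ B0ᵀ D00ᵀ D10ᵀ
        (A + B2 * (M * V⁻¹)) B0 P 0 0
        (C0 + D02 * (M * V⁻¹)) D00 0 X 0
        (C1 + D12 * (M * V⁻¹)) D10 0 0 (1 : Matrix (Fin ne) (Fin ne) ℝ)) *
      (blk55 V 0 0 0 0
        0 X 0 0 0
        0 0 (1 : Matrix (Fin n) (Fin n) ℝ) 0 0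
        0 0 0 (1 : Matrix (Fin np) (Fin np) ℝ) 0
        0 0 0 0 (1 : Matrix (Fin ne) (Fin ne) ℝ)) ∧
    ((LMIsf A B0 B2 C0 D00 D02 C1 D10 D12 P X V M).PosDef ↔
      (blk55
        ((V⁻¹)ᵀ * (V + Vᵀ - P) * V⁻¹) 0 (A + B2 * (M * V⁻¹))ᵀ (C0 + D02 * (M * V⁻¹))ᵀ
          (C1 + D12 * (M * V⁻¹))ᵀ
        0 X⁻¹ B0ᵀ D00ᵀ D10ᵀ
        (A + B2 * (M * V⁻¹)) B0 P 0 0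
        (C0 + D02 * (M * V⁻¹)) D00 0 X 0
        (C1 + D12 * (M * V⁻¹)) D10 0 0 (1 : Matrix (Fin ne) (Fin ne) ℝ)).PosDef) := by
  have hT : IsUnit (blk55Diag V X (1 : Matrix (Fin n) (Fin n) ℝ) (1 : Matrix (Fin np) (Fin np) ℝ)
      (1 : Matrix (Fin ne) (Fin ne) ℝ)) :=
    isUnit_blk55Diag hV hX.isUnit isUnit_one isUnit_one isUnit_one
  refine (fun key ↦ ⟨key, by rw [key]; exact posDef_transpose_mul_mul_iff hT⟩) ?_
  change _ = (blk55Diag V X 1 1 1)ᵀ * _ * blk55Diag V X 1 1 1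
  have hXT : Xᵀ = X := hX.isHermitian
  have hVdet : IsUnit V.det := (isUnit_iff_isUnit_det V).mp hV
  have hXdet : IsUnit X.det := (isUnit_iff_isUnit_det X).mp hX.isUnit
  rw [blk55Diag_transpose_mul_blk55_mul_blk55Diag, LMIsf]
  congr 1
  all_goals simp only [transpose_one, Matrix.one_mul, Matrix.mul_one, Matrix.mul_zero,
    Matrix.zero_mul, hXT, ← transpose_mul, add_mul_mul_nonsing_inv_mul _ _ _ hV,
    Matrix.mul_assoc, transpose_nonsing_inv, nonsing_inv_mul _ hVdet, nonsing_inv_mul _ hXdet,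
    mul_nonsing_inv_cancel_left _ _ (isUnit_det_transpose V hVdet), add_comm Vᵀ V]

/-- With `T := diag(V, X, I, I, I)` and
`N := [[V⁻ᵀ(V+Vᵀ−P)V⁻¹, 0, (A+B₂F)ᵀ, (C₀+D₀₂F)ᵀ, (C₁+D₁₂F)ᵀ], [0, X⁻¹, B₀ᵀ, D₀₀ᵀ, D₁₀ᵀ],
[A+B₂F, B₀, P, 0, 0], [C₀+D₀₂F, D₀₀, 0, X, 0], [C₁+D₁₂F, D₁₀, 0, 0, I]]` where `F := M·V⁻¹`,
we have `LMI(P,X,V,M) = Tᵀ · N · T`; consequently `LMI(P,X,V,M)` is positive definite iff `N`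
is positive definite. -/
theorem statement3 {n np ne nu : ℕ}
    (A : Matrix (Fin n) (Fin n) ℝ) (B0 : Matrix (Fin n) (Fin np) ℝ)
    (B2 : Matrix (Fin n) (Fin nu) ℝ) (C0 : Matrix (Fin np) (Fin n) ℝ)
    (D00 : Matrix (Fin np) (Fin np) ℝ) (D02 : Matrix (Fin np) (Fin nu) ℝ)
    (C1 : Matrix (Fin ne) (Fin n) ℝ) (D10 : Matrix (Fin ne) (Fin np) ℝ)
    (D12 : Matrix (Fin ne) (Fin nu) ℝ)
    (P : Matrix (Fin n) (Fin n) ℝ) (X : Matrix (Fin np) (Fin np) ℝ)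
    (V : Matrix (Fin n) (Fin n) ℝ) (M : Matrix (Fin nu) (Fin n) ℝ)
    (hP : P.IsHermitian) (hX : X.PosDef) (hV : IsUnit V) :
    LMIsf A B0 B2 C0 D00 D02 C1 D10 D12 P X V M =
      (blk55 V 0 0 0 0
        0 X 0 0 0
        0 0 (1 : Matrix (Fin n) (Fin n) ℝ) 0 0
        0 0 0 (1 : Matrix (Fin np) (Fin np) ℝ) 0
        0 0 0 0 (1 : Matrix (Fin ne) (Fin ne) ℝ))ᵀ *
      (blk55
        ((V⁻¹)ᵀ * (V + Vᵀ - P) * V⁻¹) 0 (A + B2 * (M * V⁻¹))ᵀ (C0 + D02 * (M * V⁻¹))ᵀ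
          (C1 + D12 * (M * V⁻¹))ᵀ
        0 X⁻¹ B0ᵀ D00ᵀ D10ᵀ
        (A + B2 * (M * V⁻¹)) B0 P 0 0
        (C0 + D02 * (M * V⁻¹)) D00 0 X 0
        (C1 + D12 * (M * V⁻¹)) D10 0 0 (1 : Matrix (Fin ne) (Fin ne) ℝ)) *
      (blk55 V 0 0 0 0
        0 X 0 0 0
        0 0 (1 : Matrix (Fin n) (Fin n) ℝ) 0 0
        0 0 0 (1 : Matrix (Fin np) (Fin np) ℝ) 0
        0 0 0 0 (1 : Matrix (Fin ne) (Fin ne) ℝ)) ∧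
    ((LMIsf A B0 B2 C0 D00 D02 C1 D10 D12 P X V M).PosDef ↔
      (blk55
        ((V⁻¹)ᵀ * (V + Vᵀ - P) * V⁻¹) 0 (A + B2 * (M * V⁻¹))ᵀ (C0 + D02 * (M * V⁻¹))ᵀ
          (C1 + D12 * (M * V⁻¹))ᵀ
        0 X⁻¹ B0ᵀ D00ᵀ D10ᵀ
        (A + B2 * (M * V⁻¹)) B0 P 0 0
        (C0 + D02 * (M * V⁻¹)) D00 0 X 0
        (C1 + D12 * (M * V⁻¹)) D10 0 0 (1 : Matrix (Fin ne) (Fin ne) ℝ)).PosDef) :=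
  statement3_general A B0 B2 C0 D00 D02 C1 D10 D12 P X V M hX hV
end

section
/- Let P (n×n) and X (n_p×n_p) be symmetric positive definite, and suppose V (n×n) and M (n_u×n) are such that the block matrix LMI(P,X,V,M) is positive definite. Then V is invertible and, with F := M·V⁻¹, the symmetric 5×5 block matrix [[P⁻¹, 0, (A+B2·F)ᵀ, (C0+D02·F)ᵀ, (C1+D12·F)ᵀ],[0, X⁻¹, B0ᵀ, D00ᵀ, D10ᵀ],[A+B2·F, B0, P, 0, 0],[C0+D02·F, D00, 0, X, 0],[C1+D12·F, D10, 0, 0, I_{n_e}]] is positive definite. -/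
open Matrix

def blkDiag5 {a1 a2 a3 a4 a5 b1 b2 b3 b4 b5 : Type*}
    (D1 : Matrix a1 b1 ℝ) (D2 : Matrix a2 b2 ℝ) (D3 : Matrix a3 b3 ℝ)
    (D4 : Matrix a4 b4 ℝ) (D5 : Matrix a5 b5 ℝ) :
    Matrix (((a1 ⊕ a2) ⊕ (a3 ⊕ a4)) ⊕ a5) (((b1 ⊕ b2) ⊕ (b3 ⊕ b4)) ⊕ b5) ℝ :=
  blk55 D1 0 0 0 0
    0 D2 0 0 0
    0 0 D3 0 0
    0 0 0 D4 0
    0 0 0 0 D5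

section BlockAlgebra

variable {a1 a2 a3 a4 a5 b1 b2 b3 b4 b5 c1 c2 c3 c4 c5 : Type*}

section
variable
    (A11 : Matrix a1 b1 ℝ) (A12 : Matrix a1 b2 ℝ) (A13 : Matrix a1 b3 ℝ) (A14 : Matrix a1 b4 ℝ)
    (A15 : Matrix a1 b5 ℝ) (A21 : Matrix a2 b1 ℝ) (A22 : Matrix a2 b2 ℝ) (A23 : Matrix a2 b3 ℝ)
    (A24 : Matrix a2 b4 ℝ) (A25 : Matrix a2 b5 ℝ) (A31 : Matrix a3 b1 ℝ) (A32 : Matrix a3 b2 ℝ)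
    (A33 : Matrix a3 b3 ℝ) (A34 : Matrix a3 b4 ℝ) (A35 : Matrix a3 b5 ℝ) (A41 : Matrix a4 b1 ℝ)
    (A42 : Matrix a4 b2 ℝ) (A43 : Matrix a4 b3 ℝ) (A44 : Matrix a4 b4 ℝ) (A45 : Matrix a4 b5 ℝ)
    (A51 : Matrix a5 b1 ℝ) (A52 : Matrix a5 b2 ℝ) (A53 : Matrix a5 b3 ℝ) (A54 : Matrix a5 b4 ℝ)
    (A55 : Matrix a5 b5 ℝ)

lemma blk55_submatrix_inl :
    (blk55 A11 A12 A13 A14 A15 A21 A22 A23 A24 A25 A31 A32 A33 A34 A35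
      A41 A42 A43 A44 A45 A51 A52 A53 A54 A55).submatrix
      (Sum.inl ∘ Sum.inl ∘ Sum.inl) (Sum.inl ∘ Sum.inl ∘ Sum.inl) = A11 := by
  ext i j
  simp [blk55, col5]

lemma blk55_add
    (B11 : Matrix a1 b1 ℝ) (B12 : Matrix a1 b2 ℝ) (B13 : Matrix a1 b3 ℝ) (B14 : Matrix a1 b4 ℝ)
    (B15 : Matrix a1 b5 ℝ) (B21 : Matrix a2 b1 ℝ) (B22 : Matrix a2 b2 ℝ) (B23 : Matrix a2 b3 ℝ)
    (B24 : Matrix a2 b4 ℝ) (B25 : Matrix a2 b5 ℝ) (B31 : Matrix a3 b1 ℝ) (B32 : Matrix a3 b2 ℝ)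
    (B33 : Matrix a3 b3 ℝ) (B34 : Matrix a3 b4 ℝ) (B35 : Matrix a3 b5 ℝ) (B41 : Matrix a4 b1 ℝ)
    (B42 : Matrix a4 b2 ℝ) (B43 : Matrix a4 b3 ℝ) (B44 : Matrix a4 b4 ℝ) (B45 : Matrix a4 b5 ℝ)
    (B51 : Matrix a5 b1 ℝ) (B52 : Matrix a5 b2 ℝ) (B53 : Matrix a5 b3 ℝ) (B54 : Matrix a5 b4 ℝ)
    (B55 : Matrix a5 b5 ℝ) :
    blk55 A11 A12 A13 A14 A15 A21 A22 A23 A24 A25 A31 A32 A33 A34 A35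
        A41 A42 A43 A44 A45 A51 A52 A53 A54 A55 +
      blk55 B11 B12 B13 B14 B15 B21 B22 B23 B24 B25 B31 B32 B33 B34 B35
        B41 B42 B43 B44 B45 B51 B52 B53 B54 B55 =
    blk55 (A11 + B11) (A12 + B12) (A13 + B13) (A14 + B14) (A15 + B15)
      (A21 + B21) (A22 + B22) (A23 + B23) (A24 + B24) (A25 + B25)
      (A31 + B31) (A32 + B32) (A33 + B33) (A34 + B34) (A35 + B35)
      (A41 + B41) (A42 + B42) (A43 + B43) (A44 + B44) (A45 + B45)
      (A51 + B51) (A52 + B52) (A53 + B53) (A54 + B54) (A55 + B55) := by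
  ext (((i | i) | (i | i)) | i) (((j | j) | (j | j)) | j) <;> simp [blk55, col5]

lemma blkDiag5_mul_blk55 [Fintype a1] [Fintype a2] [Fintype a3] [Fintype a4] [Fintype a5]
    (D1 : Matrix c1 a1 ℝ) (D2 : Matrix c2 a2 ℝ) (D3 : Matrix c3 a3 ℝ)
    (D4 : Matrix c4 a4 ℝ) (D5 : Matrix c5 a5 ℝ) :
    blkDiag5 D1 D2 D3 D4 D5 * blk55 A11 A12 A13 A14 A15 A21 A22 A23 A24 A25
      A31 A32 A33 A34 A35 A41 A42 A43 A44 A45 A51 A52 A53 A54 A55 =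
    blk55 (D1 * A11) (D1 * A12) (D1 * A13) (D1 * A14) (D1 * A15)
      (D2 * A21) (D2 * A22) (D2 * A23) (D2 * A24) (D2 * A25)
      (D3 * A31) (D3 * A32) (D3 * A33) (D3 * A34) (D3 * A35)
      (D4 * A41) (D4 * A42) (D4 * A43) (D4 * A44) (D4 * A45)
      (D5 * A51) (D5 * A52) (D5 * A53) (D5 * A54) (D5 * A55) := by
  ext (((i | i) | (i | i)) | i) (((j | j) | (j | j)) | j) <;>
    simp [blkDiag5, blk55, col5, mul_apply, Fintype.sum_sum_type]

lemma blk55_mul_blkDiag5 [Fintype b1] [Fintype b2] [Fintype b3] [Fintype b4] [Fintype b5]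
    (D1 : Matrix b1 c1 ℝ) (D2 : Matrix b2 c2 ℝ) (D3 : Matrix b3 c3 ℝ)
    (D4 : Matrix b4 c4 ℝ) (D5 : Matrix b5 c5 ℝ) :
    blk55 A11 A12 A13 A14 A15 A21 A22 A23 A24 A25 A31 A32 A33 A34 A35
      A41 A42 A43 A44 A45 A51 A52 A53 A54 A55 * blkDiag5 D1 D2 D3 D4 D5 =
    blk55 (A11 * D1) (A12 * D2) (A13 * D3) (A14 * D4) (A15 * D5)
      (A21 * D1) (A22 * D2) (A23 * D3) (A24 * D4) (A25 * D5)
      (A31 * D1) (A32 * D2) (A33 * D3) (A34 * D4) (A35 * D5)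
      (A41 * D1) (A42 * D2) (A43 * D3) (A44 * D4) (A45 * D5)
      (A51 * D1) (A52 * D2) (A53 * D3) (A54 * D4) (A55 * D5) := by
  ext (((i | i) | (i | i)) | i) (((j | j) | (j | j)) | j) <;>
    simp [blkDiag5, blk55, col5, mul_apply, Fintype.sum_sum_type]

end

section
variable (D1 : Matrix a1 b1 ℝ) (D2 : Matrix a2 b2 ℝ) (D3 : Matrix a3 b3 ℝ)
    (D4 : Matrix a4 b4 ℝ) (D5 : Matrix a5 b5 ℝ)

lemma blkDiag5_transpose :
    (blkDiag5 D1 D2 D3 D4 D5)ᵀ = blkDiag5 D1ᵀ D2ᵀ D3ᵀ D4ᵀ D5ᵀ := by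
  ext (((i | i) | (i | i)) | i) (((j | j) | (j | j)) | j) <;> simp [blkDiag5, blk55, col5]

lemma blkDiag5_mul_blkDiag5 [Fintype b1] [Fintype b2] [Fintype b3] [Fintype b4] [Fintype b5]
    (E1 : Matrix b1 c1 ℝ) (E2 : Matrix b2 c2 ℝ) (E3 : Matrix b3 c3 ℝ)
    (E4 : Matrix b4 c4 ℝ) (E5 : Matrix b5 c5 ℝ) :
    blkDiag5 D1 D2 D3 D4 D5 * blkDiag5 E1 E2 E3 E4 E5 =
      blkDiag5 (D1 * E1) (D2 * E2) (D3 * E3) (D4 * E4) (D5 * E5) := by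
  rw [blkDiag5, blk55_mul_blkDiag5]
  simp only [Matrix.zero_mul]
  rfl

end

lemma posSemidef_blkDiag5_transpose_mul_mul_zero [Fintype a1] [Fintype a2] [Fintype a3]
    [Fintype a4] [Fintype a5] {m : Type*} [Fintype m] {Q : Matrix m m ℝ}
    (hQ : Q.PosSemidef) (W : Matrix m a1 ℝ) :
    (blkDiag5 (Wᵀ * Q * W) (0 : Matrix a2 a2 ℝ) (0 : Matrix a3 a3 ℝ) (0 : Matrix a4 a4 ℝ)
      (0 : Matrix a5 a5 ℝ)).PosSemidef := by
  have hcol := hQ.conjTranspose_mul_mul_same (col5 W (0 : Matrix m a2 ℝ) (0 : Matrix m a3 ℝ)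
    (0 : Matrix m a4 ℝ) (0 : Matrix m a5 ℝ))
  convert hcol using 1
  ext (((i | i) | (i | i)) | i) (((j | j) | (j | j)) | j) <;>
    simp [blkDiag5, blk55, col5, mul_apply, Finset.sum_mul]

variable [DecidableEq a1] [DecidableEq a2] [DecidableEq a3] [DecidableEq a4] [DecidableEq a5]

lemma blkDiag5_one :
    blkDiag5 (1 : Matrix a1 a1 ℝ) (1 : Matrix a2 a2 ℝ) (1 : Matrix a3 a3 ℝ)
      (1 : Matrix a4 a4 ℝ) (1 : Matrix a5 a5 ℝ) = 1 := by
  ext (((i | i) | (i | i)) | i) (((j | j) | (j | j)) | j) <;>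
    simp [blkDiag5, blk55, col5, one_apply]

variable [Fintype a1] [Fintype a2] [Fintype a3] [Fintype a4] [Fintype a5]

lemma isUnit_blkDiag5 {D1 : Matrix a1 a1 ℝ} {D2 : Matrix a2 a2 ℝ} {D3 : Matrix a3 a3 ℝ}
    {D4 : Matrix a4 a4 ℝ} {D5 : Matrix a5 a5 ℝ} (h1 : IsUnit D1) (h2 : IsUnit D2)
    (h3 : IsUnit D3) (h4 : IsUnit D4) (h5 : IsUnit D5) :
    IsUnit (blkDiag5 D1 D2 D3 D4 D5) := by
  obtain ⟨u1, rfl⟩ := h1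
  obtain ⟨u2, rfl⟩ := h2
  obtain ⟨u3, rfl⟩ := h3
  obtain ⟨u4, rfl⟩ := h4
  obtain ⟨u5, rfl⟩ := h5
  refine ⟨⟨blkDiag5 ↑u1 ↑u2 ↑u3 ↑u4 ↑u5, blkDiag5 ↑u1⁻¹ ↑u2⁻¹ ↑u3⁻¹ ↑u4⁻¹ ↑u5⁻¹, ?_, ?_⟩, rfl⟩ <;>
    simp only [blkDiag5_mul_blkDiag5, Units.mul_inv, Units.inv_mul, blkDiag5_one]

end BlockAlgebra

lemma isUnit_of_posDef_transpose_add_sub {k : Type*} [Fintype k] [DecidableEq k]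
    {V P : Matrix k k ℝ} (h : (Vᵀ + V - P).PosDef) (hP : P.PosSemidef) : IsUnit V := by
  rw [isUnit_iff_isUnit_det, isUnit_iff_ne_zero]
  intro hdet
  obtain ⟨x, hx, hVx⟩ := exists_mulVec_eq_zero_iff.mpr hdet
  have hpos := h.dotProduct_mulVec_pos hx
  have hnonneg := hP.dotProduct_mulVec_nonneg x
  rw [star_trivial, sub_mulVec, add_mulVec, dotProduct_sub, dotProduct_add,
    dotProduct_mulVec x Vᵀ, vecMul_transpose, hVx] at hpos
  rw [star_trivial] at hnonneg
  simp only [zero_dotProduct, dotProduct_zero, add_zero] at hpos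
  linarith

lemma transpose_add_sub_add_mul_inv_mul {R k : Type*} [CommRing R] [Fintype k] [DecidableEq k]
    {P : Matrix k k R} (hP : P.IsSymm) (hPu : IsUnit P) (V : Matrix k k R) :
    Vᵀ + V - P + (V - P)ᵀ * P⁻¹ * (V - P) = Vᵀ * P⁻¹ * V := by
  have hPd := (isUnit_iff_isUnit_det P).mp hPu
  rw [transpose_sub, hP.eq, Matrix.sub_mul, Matrix.sub_mul, Matrix.mul_sub, Matrix.mul_sub,
    mul_nonsing_inv P hPd, nonsing_inv_mul_cancel_right P _ hPd]
  simp only [Matrix.one_mul]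
  abel

section LMI

variable {n np ne nu : ℕ}
    (A : Matrix (Fin n) (Fin n) ℝ) (B0 : Matrix (Fin n) (Fin np) ℝ)
    (B2 : Matrix (Fin n) (Fin nu) ℝ) (C0 : Matrix (Fin np) (Fin n) ℝ)
    (D00 : Matrix (Fin np) (Fin np) ℝ) (D02 : Matrix (Fin np) (Fin nu) ℝ)
    (C1 : Matrix (Fin ne) (Fin n) ℝ) (D10 : Matrix (Fin ne) (Fin np) ℝ)
    (D12 : Matrix (Fin ne) (Fin nu) ℝ)
    {P : Matrix (Fin n) (Fin n) ℝ} {X : Matrix (Fin np) (Fin np) ℝ}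
    {V : Matrix (Fin n) (Fin n) ℝ} {M : Matrix (Fin nu) (Fin n) ℝ}

lemma posDef_LMIsf_topLeft (h : (LMIsf A B0 B2 C0 D00 D02 C1 D10 D12 P X V M).PosDef) :
    (Vᵀ + V - P).PosDef := by
  have hinj : Function.Injective
      (Sum.inl ∘ Sum.inl ∘ Sum.inl : Fin n → ((Fin n ⊕ Fin np) ⊕ (Fin n ⊕ Fin np)) ⊕ Fin ne) :=
    Sum.inl_injective.comp (Sum.inl_injective.comp Sum.inl_injective)
  simpa only [LMIsf, blk55_submatrix_inl] using h.submatrix hinj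

lemma posDef_LMIsf_completed (hP : P.PosDef)
    (h : (LMIsf A B0 B2 C0 D00 D02 C1 D10 D12 P X V M).PosDef) :
    (blk55 (Vᵀ * P⁻¹ * V) 0 (A * V + B2 * M)ᵀ (C0 * V + D02 * M)ᵀ (C1 * V + D12 * M)ᵀ
      0 X (X * B0ᵀ) (X * D00ᵀ) (X * D10ᵀ)
      (A * V + B2 * M) (B0 * X) P 0 0
      (C0 * V + D02 * M) (D00 * X) 0 X 0
      (C1 * V + D12 * M) (D10 * X) 0 0 (1 : Matrix (Fin ne) (Fin ne) ℝ)).PosDef := by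
  have hgap := posSemidef_blkDiag5_transpose_mul_mul_zero (a2 := Fin np) (a3 := Fin n)
    (a4 := Fin np) (a5 := Fin ne) hP.inv.posSemidef (V - P)
  convert h.add_posSemidef hgap using 1
  rw [LMIsf, blkDiag5, blk55_add,
    transpose_add_sub_add_mul_inv_mul (isHermitian_iff_isSymm.mp hP.isHermitian) hP.isUnit]
  simp only [add_zero]

lemma transpose_blkDiag5_mul_closedLoop_mul_blkDiag5 {F : Matrix (Fin nu) (Fin n) ℝ}
    (hF : F * V = M) (hX : X.IsSymm) (hXu : IsUnit X) (Q : Matrix (Fin n) (Fin n) ℝ) :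
    (blkDiag5 V X 1 1 1)ᵀ *
      blk55 Q 0 (A + B2 * F)ᵀ (C0 + D02 * F)ᵀ (C1 + D12 * F)ᵀ
        0 X⁻¹ B0ᵀ D00ᵀ D10ᵀ
        (A + B2 * F) B0 P 0 0
        (C0 + D02 * F) D00 0 X 0
        (C1 + D12 * F) D10 0 0 (1 : Matrix (Fin ne) (Fin ne) ℝ) *
      blkDiag5 V X 1 1 1 =
    blk55 (Vᵀ * Q * V) 0 (A * V + B2 * M)ᵀ (C0 * V + D02 * M)ᵀ (C1 * V + D12 * M)ᵀ
      0 X (X * B0ᵀ) (X * D00ᵀ) (X * D10ᵀ)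
      (A * V + B2 * M) (B0 * X) P 0 0
      (C0 * V + D02 * M) (D00 * X) 0 X 0
      (C1 * V + D12 * M) (D10 * X) 0 0 (1 : Matrix (Fin ne) (Fin ne) ℝ) := by
  have hXd := (isUnit_iff_isUnit_det X).mp hXu
  have hFV {m : ℕ} (G : Matrix (Fin m) (Fin n) ℝ) (K : Matrix (Fin m) (Fin nu) ℝ) :
      (G + K * F) * V = G * V + K * M := by
    rw [Matrix.add_mul, Matrix.mul_assoc, hF]
  rw [blkDiag5_transpose, blkDiag5_mul_blk55, blk55_mul_blkDiag5]
  simp only [transpose_one, hX.eq, Matrix.mul_zero, Matrix.zero_mul, Matrix.one_mul,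
    Matrix.mul_one, ← transpose_mul, hFV, mul_nonsing_inv X hXd, Matrix.mul_assoc]

end LMI

/-- If `P`, `X` are symmetric positive definite and `LMI(P,X,V,M)` is positive definite, then
`V` is invertible and, with `F := M·V⁻¹`, the block matrix
`[[P⁻¹, 0, (A+B₂F)ᵀ, (C₀+D₀₂F)ᵀ, (C₁+D₁₂F)ᵀ], [0, X⁻¹, B₀ᵀ, D₀₀ᵀ, D₁₀ᵀ], [A+B₂F, B₀, P, 0, 0],
[C₀+D₀₂F, D₀₀, 0, X, 0], [C₁+D₁₂F, D₁₀, 0, 0, I]]` is positive definite. -/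
theorem statement4 {n np ne nu : ℕ}
    (A : Matrix (Fin n) (Fin n) ℝ) (B0 : Matrix (Fin n) (Fin np) ℝ)
    (B2 : Matrix (Fin n) (Fin nu) ℝ) (C0 : Matrix (Fin np) (Fin n) ℝ)
    (D00 : Matrix (Fin np) (Fin np) ℝ) (D02 : Matrix (Fin np) (Fin nu) ℝ)
    (C1 : Matrix (Fin ne) (Fin n) ℝ) (D10 : Matrix (Fin ne) (Fin np) ℝ)
    (D12 : Matrix (Fin ne) (Fin nu) ℝ)
    (P : Matrix (Fin n) (Fin n) ℝ) (X : Matrix (Fin np) (Fin np) ℝ)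
    (V : Matrix (Fin n) (Fin n) ℝ) (M : Matrix (Fin nu) (Fin n) ℝ)
    (hP : P.PosDef) (hX : X.PosDef)
    (h : (LMIsf A B0 B2 C0 D00 D02 C1 D10 D12 P X V M).PosDef) :
    IsUnit V ∧
    (blk55
      P⁻¹ 0 (A + B2 * (M * V⁻¹))ᵀ (C0 + D02 * (M * V⁻¹))ᵀ (C1 + D12 * (M * V⁻¹))ᵀ
      0 X⁻¹ B0ᵀ D00ᵀ D10ᵀ
      (A + B2 * (M * V⁻¹)) B0 P 0 0
      (C0 + D02 * (M * V⁻¹)) D00 0 X 0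
      (C1 + D12 * (M * V⁻¹)) D10 0 0 (1 : Matrix (Fin ne) (Fin ne) ℝ)).PosDef := by
  have hV : IsUnit V := isUnit_of_posDef_transpose_add_sub
    (posDef_LMIsf_topLeft A B0 B2 C0 D00 D02 C1 D10 D12 h) hP.posSemidef
  have hFV : M * V⁻¹ * V = M := nonsing_inv_mul_cancel_right V M ((isUnit_iff_isUnit_det V).mp hV)
  have hS : IsUnit (blkDiag5 V X (1 : Matrix (Fin n) (Fin n) ℝ) (1 : Matrix (Fin np) (Fin np) ℝ)
      (1 : Matrix (Fin ne) (Fin ne) ℝ)) :=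
    isUnit_blkDiag5 hV hX.isUnit isUnit_one isUnit_one isUnit_one
  refine ⟨hV, ?_⟩
  rw [← hS.posDef_star_left_conjugate_iff, star_eq_conjTranspose,
    conjTranspose_eq_transpose_of_trivial, transpose_blkDiag5_mul_closedLoop_mul_blkDiag5 A B0 B2
      C0 D00 D02 C1 D10 D12 hFV (isHermitian_iff_isSymm.mp hX.isHermitian) hX.isUnit]
  exact posDef_LMIsf_completed A B0 B2 C0 D00 D02 C1 D10 D12 hP h
end

section
/- Let L and J be symmetric m×m real matrices such that the 2m×2m block matrix [[L, I_m],[I_m, J]] is positive definite. Then there exists a symmetric positive definite 2m×2m matrix X whose (1,1) m×m block equals J and such that the (1,1) m×m block of X⁻¹ equals L. -/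
/-!
Since `[[L, I], [I, J]] ≻ 0`, its corner `L` is positive definite and so is the Schur
complement `J - L⁻¹`. Take `X = [[J, I], [I, K]]` with `K = (J - L⁻¹)⁻¹ ≻ 0`. The Schur
complement of `K` in `X` is `J - K⁻¹ = L⁻¹ ≻ 0`, so `X ≻ 0`, and the `(1,1)` block of `X⁻¹`
is the inverse of that Schur complement, namely `L`.
-/

open Matrix

namespace Matrix

variable {m n R : Type*}

theorem toBlocks₁₁_inv_fromBlocks [Fintype m] [Fintype n] [DecidableEq m] [DecidableEq n]
    [CommRing R] (A : Matrix m m R) (B : Matrix m n R) (C : Matrix n m R) {D : Matrix n n R}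
    (hD : IsUnit D) (hS : IsUnit (A - B * D⁻¹ * C)) :
    (fromBlocks A B C D)⁻¹.toBlocks₁₁ = (A - B * D⁻¹ * C)⁻¹ := by
  let := hD.invertible
  let : Invertible (A - B * ⅟D * C) := by rw [invOf_eq_nonsing_inv]; exact hS.invertible
  let := fromBlocks₂₂Invertible A B C D
  rw [← invOf_eq_nonsing_inv, invOf_fromBlocks₂₂_eq, toBlocks_fromBlocks₁₁]
  simp only [invOf_eq_nonsing_inv]

theorem posDef_submatrix_equiv [Ring R] [PartialOrder R] [StarRing R] {M : Matrix n n R}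
    (e : m ≃ n) : (M.submatrix e e).PosDef ↔ M.PosDef :=
  ⟨fun h => by simpa using h.submatrix e.symm.injective, fun h => h.submatrix e.injective⟩

section SchurComplement

variable [Fintype m] [Fintype n] [CommRing R] [PartialOrder R] [StarRing R] [StarOrderedRing R]

theorem posDef_fromBlocks₁₁_iff [DecidableEq m] {A : Matrix m m R} (B : Matrix m n R)
    (D : Matrix n n R) (hA : A.PosDef) [Invertible A] :
    (fromBlocks A B Bᴴ D).PosDef ↔ (D - Bᴴ * A⁻¹ * B).PosDef := by
  rw [posDef_iff_dotProduct_mulVec, posDef_iff_dotProduct_mulVec,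
    IsHermitian.fromBlocks₁₁ _ _ hA.1]
  refine and_congr_right fun _ => ⟨fun h y hy => ?_, fun h v hv => ?_⟩
  · have := h (x := -((A⁻¹ * B) *ᵥ y) ⊕ᵥ y) fun h0 =>
      hy (by simpa using congrArg (· ∘ Sum.inr) h0)
    rwa [dotProduct_mulVec, schur_complement_eq₁₁ B D _ _ hA.1, neg_add_cancel, dotProduct_zero,
      zero_add, ← dotProduct_mulVec] at this
  · rw [← Sum.elim_comp_inl_inr v, dotProduct_mulVec, schur_complement_eq₁₁ B D _ _ hA.1,
      ← dotProduct_mulVec, ← dotProduct_mulVec]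
    rcases eq_or_ne (v ∘ Sum.inr) 0 with hy | hy
    · have hx : v ∘ Sum.inl ≠ 0 := fun hx => hv <| by
        rw [← Sum.elim_comp_inl_inr v, hx, hy, Sum.elim_zero_zero]
      simpa [hy] using hA.dotProduct_mulVec_pos hx
    · exact add_pos_of_nonneg_of_pos (hA.posSemidef.dotProduct_mulVec_nonneg _) (h hy)

theorem posDef_fromBlocks₂₂_iff [DecidableEq n] (A : Matrix m m R) (B : Matrix m n R)
    {D : Matrix n n R} (hD : D.PosDef) [Invertible D] :
    (fromBlocks A B Bᴴ D).PosDef ↔ (A - B * D⁻¹ * Bᴴ).PosDef := by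
  rw [← posDef_submatrix_equiv (Equiv.sumComm n m), Equiv.sumComm_apply,
    fromBlocks_submatrix_sum_swap_sum_swap]
  convert posDef_fromBlocks₁₁_iff Bᴴ A hD <;> simp

end SchurComplement

end Matrix

theorem statement9_general {m : ℕ} (L J : Matrix (Fin m) (Fin m) ℝ)
    (h : (fromBlocks L 1 1 J).PosDef) :
    ∃ X : Matrix (Fin m ⊕ Fin m) (Fin m ⊕ Fin m) ℝ,
      X.PosDef ∧ X.toBlocks₁₁ = J ∧ X⁻¹.toBlocks₁₁ = L := by
  have hL : L.PosDef := h.submatrix Sum.inl_injective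
  let := hL.isUnit.invertible
  have hE : (J - L⁻¹).PosDef := by
    simpa using (posDef_fromBlocks₁₁_iff 1 J hL).1 (by simpa using h)
  let K := (J - L⁻¹)⁻¹
  have hK : K.PosDef := hE.inv
  let := hK.isUnit.invertible
  have hSchur : J - 1 * K⁻¹ * 1 = L⁻¹ := by
    simp [K, nonsing_inv_nonsing_inv _ hE.det_pos.ne'.isUnit]
  refine ⟨fromBlocks J 1 1 K, ?_, toBlocks_fromBlocks₁₁ .., ?_⟩
  · have hX := (posDef_fromBlocks₂₂_iff J 1 hK).2 (by rw [conjTranspose_one, hSchur]; exact hL.inv)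
    simpa using hX
  · rw [toBlocks₁₁_inv_fromBlocks J 1 1 hK.isUnit (hSchur ▸ hL.inv.isUnit), hSchur,
      inv_inv_of_invertible]

/-- If `L`, `J` are symmetric `m × m` matrices with `[[L, I],[I, J]]` positive definite, then
there exists a symmetric positive definite `2m × 2m` matrix `X` whose `(1,1)` block is `J`
and such that the `(1,1)` block of `X⁻¹` is `L`. -/
theorem statement9 {m : ℕ} (L J : Matrix (Fin m) (Fin m) ℝ)
    (hL : L.IsHermitian) (hJ : J.IsHermitian)
    (h : (fromBlocks L 1 1 J).PosDef) :
    ∃ X : Matrix (Fin m ⊕ Fin m) (Fin m ⊕ Fin m) ℝ,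
      X.PosDef ∧ X.toBlocks₁₁ = J ∧ X⁻¹.toBlocks₁₁ = L :=
  statement9_general L J h
end

section
/- Let S, R, U be real n×n matrices such that U − R·S is invertible, let M be any invertible n×n matrix, and set N := M⁻¹·(U − R·S). Then N is invertible, the matrix Z := [[I_n, Rᵀ],[0, Mᵀ]] is invertible, and V := [[S, I_n],[N, 0]]·Z⁻¹ is an invertible 2n×2n matrix whose (1,1) block is S and whose (2,1) block is N, while the (1,1) block of V⁻¹ is Rᵀ and the (2,1) block of V⁻¹ is Mᵀ; moreover M·N = U − R·S. -/
/-!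
`V * Z = [[S, I], [N, 0]]` and `V⁻¹ * [[S, I], [N, 0]] = Z`. Right multiplication by
`Z = [[I, *], [0, *]]` leaves the first block column unchanged, and right multiplication by
`[[*, I], [*, 0]]` moves the first block column into the second, so the first block columns of
`V` and `V⁻¹` can be read off `[[S, I], [N, 0]]` and `Z`. Both of these matrices are invertible
because their determinants are, up to sign, `det Mᵀ` and `det N`.
-/

open Matrix

namespace Matrix

variable {m n R : Type*} [Fintype m] [Fintype n] [DecidableEq m]

section CommRing

variable [CommRing R]

theorem isUnit_fromBlocks_one₁₁_zero₂₁ [DecidableEq n] (B : Matrix m n R) (D : Matrix n n R)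
    (hD : IsUnit D) :
    IsUnit (fromBlocks (1 : Matrix m m R) B 0 D) := by
  rw [isUnit_iff_isUnit_det, det_fromBlocks_zero₂₁, det_one, one_mul]
  exact (isUnit_iff_isUnit_det D).1 hD

theorem isUnit_fromBlocks_zero_one_one_zero :
    IsUnit (fromBlocks 0 1 1 0 : Matrix (m ⊕ m) (m ⊕ m) R) := by
  refine (isUnit_iff_isUnit_det _).2 (isUnit_det_of_right_inverse (B := fromBlocks 0 1 1 0) ?_)
  rw [fromBlocks_multiply, ← fromBlocks_one]
  simp

theorem fromBlocks_mul_fromBlocks_zero_one_one_zero (A B D : Matrix m m R) :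
    fromBlocks A B 0 D * (fromBlocks 0 1 1 0 : Matrix (m ⊕ m) (m ⊕ m) R) =
      fromBlocks B A D 0 := by
  simp [fromBlocks_multiply]

theorem isUnit_fromBlocks_one₁₂_zero₂₂ (A C : Matrix m m R) (hC : IsUnit C) :
    IsUnit (fromBlocks A (1 : Matrix m m R) C 0) := by
  rw [← fromBlocks_mul_fromBlocks_zero_one_one_zero]
  exact (isUnit_fromBlocks_one₁₁_zero₂₁ A C hC).mul isUnit_fromBlocks_zero_one_one_zero

end CommRing

section Semiring

variable {l o : Type*} [Semiring R]

theorem toBlocks₁₁_mul_fromBlocks_one₁₁_zero₂₁ (X : Matrix (l ⊕ o) (m ⊕ n) R)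
    (B : Matrix m n R) (D : Matrix n n R) :
    (X * fromBlocks 1 B 0 D).toBlocks₁₁ = X.toBlocks₁₁ := by
  conv_lhs => rw [← fromBlocks_toBlocks X]
  simp [fromBlocks_multiply]

theorem toBlocks₂₁_mul_fromBlocks_one₁₁_zero₂₁ (X : Matrix (l ⊕ o) (m ⊕ n) R)
    (B : Matrix m n R) (D : Matrix n n R) :
    (X * fromBlocks 1 B 0 D).toBlocks₂₁ = X.toBlocks₂₁ := by
  conv_lhs => rw [← fromBlocks_toBlocks X]
  simp [fromBlocks_multiply]

theorem toBlocks₁₂_mul_fromBlocks_one₁₂_zero₂₂ (X : Matrix (l ⊕ o) (m ⊕ n) R)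
    (A : Matrix m m R) (C : Matrix n m R) :
    (X * fromBlocks A 1 C 0).toBlocks₁₂ = X.toBlocks₁₁ := by
  conv_lhs => rw [← fromBlocks_toBlocks X]
  simp [fromBlocks_multiply]

theorem toBlocks₂₂_mul_fromBlocks_one₁₂_zero₂₂ (X : Matrix (l ⊕ o) (m ⊕ n) R)
    (A : Matrix m m R) (C : Matrix n m R) :
    (X * fromBlocks A 1 C 0).toBlocks₂₂ = X.toBlocks₂₁ := by
  conv_lhs => rw [← fromBlocks_toBlocks X]
  simp [fromBlocks_multiply]

end Semiring

end Matrix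

/-- Let `S, R, U` be `n × n` matrices with `U - R*S` invertible, `M` invertible, and
`N := M⁻¹ * (U - R*S)`.  Then `N` is invertible, `Z := [[I, Rᵀ],[0, Mᵀ]]` is invertible, and
`V := [[S, I],[N, 0]] * Z⁻¹` is invertible with `(1,1)` block `S`, `(2,1)` block `N`, while
`V⁻¹` has `(1,1)` block `Rᵀ` and `(2,1)` block `Mᵀ`; moreover `M * N = U - R*S`. -/
theorem statement10 {n : ℕ} (S R U M : Matrix (Fin n) (Fin n) ℝ)
    (hU : IsUnit (U - R * S)) (hM : IsUnit M) :
    IsUnit (M⁻¹ * (U - R * S)) ∧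
    IsUnit (fromBlocks (1 : Matrix (Fin n) (Fin n) ℝ) Rᵀ 0 Mᵀ) ∧
    IsUnit (fromBlocks S 1 (M⁻¹ * (U - R * S)) 0 *
        (fromBlocks (1 : Matrix (Fin n) (Fin n) ℝ) Rᵀ 0 Mᵀ)⁻¹) ∧
    (fromBlocks S 1 (M⁻¹ * (U - R * S)) 0 *
        (fromBlocks (1 : Matrix (Fin n) (Fin n) ℝ) Rᵀ 0 Mᵀ)⁻¹).toBlocks₁₁ = S ∧
    (fromBlocks S 1 (M⁻¹ * (U - R * S)) 0 *
        (fromBlocks (1 : Matrix (Fin n) (Fin n) ℝ) Rᵀ 0 Mᵀ)⁻¹).toBlocks₂₁ =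
      M⁻¹ * (U - R * S) ∧
    ((fromBlocks S 1 (M⁻¹ * (U - R * S)) 0 *
        (fromBlocks (1 : Matrix (Fin n) (Fin n) ℝ) Rᵀ 0 Mᵀ)⁻¹)⁻¹).toBlocks₁₁ = Rᵀ ∧
    ((fromBlocks S 1 (M⁻¹ * (U - R * S)) 0 *
        (fromBlocks (1 : Matrix (Fin n) (Fin n) ℝ) Rᵀ 0 Mᵀ)⁻¹)⁻¹).toBlocks₂₁ = Mᵀ ∧
    M * (M⁻¹ * (U - R * S)) = U - R * S := by
  set N := M⁻¹ * (U - R * S)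
  set Z := fromBlocks (1 : Matrix (Fin n) (Fin n) ℝ) Rᵀ 0 Mᵀ
  set W := fromBlocks S (1 : Matrix (Fin n) (Fin n) ℝ) N 0
  have hN : IsUnit N := (isUnit_nonsing_inv_iff.2 hM).mul hU
  have hZ : IsUnit Z := isUnit_fromBlocks_one₁₁_zero₂₁ _ _ ((isUnit_transpose M).2 hM)
  have hW : IsUnit W := isUnit_fromBlocks_one₁₂_zero₂₂ _ _ hN
  have hVZ : W * Z⁻¹ * Z = W := nonsing_inv_mul_cancel_right _ _ ((isUnit_iff_isUnit_det Z).1 hZ)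
  have hV : IsUnit (W * Z⁻¹) := hW.mul (isUnit_nonsing_inv_iff.2 hZ)
  have hVinvW : (W * Z⁻¹)⁻¹ * W = Z := by
    simpa only [hVZ] using nonsing_inv_mul_cancel_left _ Z ((isUnit_iff_isUnit_det _).1 hV)
  refine ⟨hN, hZ, hV, ?_, ?_, ?_, ?_,
    mul_nonsing_inv_cancel_left _ _ ((isUnit_iff_isUnit_det M).1 hM)⟩
  · rw [← toBlocks₁₁_mul_fromBlocks_one₁₁_zero₂₁, hVZ, toBlocks_fromBlocks₁₁]
  · rw [← toBlocks₂₁_mul_fromBlocks_one₁₁_zero₂₁, hVZ, toBlocks_fromBlocks₂₁]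
  · rw [← toBlocks₁₂_mul_fromBlocks_one₁₂_zero₂₂ _ S N, hVinvW, toBlocks_fromBlocks₁₂]
  · rw [← toBlocks₂₂_mul_fromBlocks_one₁₂_zero₂₂ _ S N, hVinvW, toBlocks_fromBlocks₂₂]
end

section
/- Let V be an invertible 2n×2n matrix with n×n block partition V = [[S, V₁₂],[N, V₂₂]] and V⁻¹ = [[Rᵀ, Y₁₂],[Mᵀ, Y₂₂]], and let X be an invertible symmetric 2n_p×2n_p matrix with n_p×n_p block partition X = [[J, J₂],[J₂ᵀ, J₃]] and X⁻¹ = [[L, L₂],[L₂ᵀ, L₃]]. Set Z := [[I_n, Rᵀ],[0, Mᵀ]] and W₁ := [[L, I_{n_p}],[L₂ᵀ, 0]]. Given controller matrices K = [[A_k, B_{k1}, B_{k0}],[C_{k1}, 0, D_{k10}],[C_{k0}, 0, D_{k00}]], define the transformed controller matrices K̂ := [[R·A·S, 0, R·B0·J],[0, 0, 0],[L·C0·S, 0, L·D00·J]] + [[M, R·B2, 0],[0, I_{n_u}, 0],[0, L·D02, L₂]]·K·[[N, 0, 0],[C2·S, I_{n_y}, D20·J],[0, 0, J₂ᵀ]].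 Then the block matrix [[Zᵀ·A_cl·V·Z, Zᵀ·B0cl·X·W₁, Zᵀ·B1cl],[W₁ᵀ·C0cl·V·Z, W₁ᵀ·D00cl·X·W₁, W₁ᵀ·D01cl],[C1cl·V·Z, D10cl·X·W₁, D11cl]] equals [[A·S, A, B0, B0·J, B1],[0, R·A, R·B0, 0, R·B1],[0, L·C0, L·D00, 0, 0],[C0·S, C0, D00, D00·J, 0],[C1·S, C1, D10, D10·J, 0]] + [[0, B2, 0],[I_n, 0, 0],[0, 0, I_{n_p}],[0, D02, 0],[0, D12, 0]]·K̂·[[I_n, 0, 0, 0, 0],[0, C2, D20, 0, D21],[0, 0, 0, I_{n_p}, 0]]. -/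
open Matrix

/-- Concatenation of three column blocks. -/
def col3 {m c1 c2 c3 : Type*}
    (M1 : Matrix m c1 ℝ) (M2 : Matrix m c2 ℝ) (M3 : Matrix m c3 ℝ) :
    Matrix m ((c1 ⊕ c2) ⊕ c3) ℝ :=
  fromCols (fromCols M1 M2) M3

/-- Concatenation of three row blocks. -/
def row3 {r1 r2 r3 m : Type*}
    (M1 : Matrix r1 m ℝ) (M2 : Matrix r2 m ℝ) (M3 : Matrix r3 m ℝ) :
    Matrix ((r1 ⊕ r2) ⊕ r3) m ℝ :=
  fromRows (fromRows M1 M2) M3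

/-- A `3 × 3` block matrix assembled from its nine blocks. -/
def blk33 {r1 r2 r3 c1 c2 c3 : Type*}
    (M11 : Matrix r1 c1 ℝ) (M12 : Matrix r1 c2 ℝ) (M13 : Matrix r1 c3 ℝ)
    (M21 : Matrix r2 c1 ℝ) (M22 : Matrix r2 c2 ℝ) (M23 : Matrix r2 c3 ℝ)
    (M31 : Matrix r3 c1 ℝ) (M32 : Matrix r3 c2 ℝ) (M33 : Matrix r3 c3 ℝ) :
    Matrix ((r1 ⊕ r2) ⊕ r3) ((c1 ⊕ c2) ⊕ c3) ℝ :=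
  row3 (col3 M11 M12 M13) (col3 M21 M22 M23) (col3 M31 M32 M33)

/-- The data of the LFT plant: state dimension `n`, uncertainty channel dimension `np`,
disturbance dimension `nd`, error dimension `ne`, control dimension `nu`, and measurement
dimension `ny`. -/
structure Plant (n np nd ne nu ny : ℕ) where
  A : Matrix (Fin n) (Fin n) ℝ
  B0 : Matrix (Fin n) (Fin np) ℝ
  B1 : Matrix (Fin n) (Fin nd) ℝ
  B2 : Matrix (Fin n) (Fin nu) ℝ
  C0 : Matrix (Fin np) (Fin n) ℝ
  D00 : Matrix (Fin np) (Fin np) ℝ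
  D02 : Matrix (Fin np) (Fin nu) ℝ
  C1 : Matrix (Fin ne) (Fin n) ℝ
  D10 : Matrix (Fin ne) (Fin np) ℝ
  D12 : Matrix (Fin ne) (Fin nu) ℝ
  C2 : Matrix (Fin ny) (Fin n) ℝ
  D20 : Matrix (Fin ny) (Fin np) ℝ
  D21 : Matrix (Fin ny) (Fin nd) ℝ

variable {n np nd ne nu ny : ℕ}

/-- The `3 × 3` block controller matrix `[[A_k, B_{k1}, B_{k0}],[C_{k1}, 0, D_{k10}],
[C_{k0}, 0, D_{k00}]]`. -/
def ctrlMat (Ak : Matrix (Fin n) (Fin n) ℝ) (Bk1 : Matrix (Fin n) (Fin ny) ℝ)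
    (Bk0 : Matrix (Fin n) (Fin np) ℝ) (Ck1 : Matrix (Fin nu) (Fin n) ℝ)
    (Dk10 : Matrix (Fin nu) (Fin np) ℝ) (Ck0 : Matrix (Fin np) (Fin n) ℝ)
    (Dk00 : Matrix (Fin np) (Fin np) ℝ) :
    Matrix ((Fin n ⊕ Fin nu) ⊕ Fin np) ((Fin n ⊕ Fin ny) ⊕ Fin np) ℝ :=
  blk33 Ak Bk1 Bk0 Ck1 0 Dk10 Ck0 0 Dk00

/-- The closed-loop matrix
`[[A_cl, B0cl, B1cl],[C0cl, D00cl, D01cl],[C1cl, D10cl, D11cl]]`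
of the LFT plant `G` interconnected with the gain-scheduled controller `K`, with block row
sizes `(n, n, np, np, ne)` and block column sizes `(n, n, np, np, nd)`. -/
def clBig (G : Plant n np nd ne nu ny)
    (K : Matrix ((Fin n ⊕ Fin nu) ⊕ Fin np) ((Fin n ⊕ Fin ny) ⊕ Fin np) ℝ) :
    Matrix (((Fin n ⊕ Fin n) ⊕ (Fin np ⊕ Fin np)) ⊕ Fin ne)
      (((Fin n ⊕ Fin n) ⊕ (Fin np ⊕ Fin np)) ⊕ Fin nd) ℝ :=
  blk33 (fromBlocks G.A 0 0 0) (fromBlocks G.B0 0 0 0) (fromRows G.B1 0)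
      (fromBlocks G.C0 0 0 0) (fromBlocks G.D00 0 0 0) 0
      (fromCols G.C1 0) (fromCols G.D10 0) 0
    + row3 (fromRows (col3 0 G.B2 0) (col3 (1 : Matrix (Fin n) (Fin n) ℝ) 0 0))
        (fromRows (col3 0 G.D02 0) (col3 0 0 (1 : Matrix (Fin np) (Fin np) ℝ)))
        (col3 0 G.D12 0) * K *
      col3 (fromCols (row3 0 G.C2 0) (row3 1 0 0))
        (fromCols (row3 0 G.D20 0) (row3 0 0 1))
        (row3 0 G.D21 0)

/-- Closed-loop state matrix `A_cl` (`2n × 2n`). -/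
def Acl (G : Plant n np nd ne nu ny)
    (K : Matrix ((Fin n ⊕ Fin nu) ⊕ Fin np) ((Fin n ⊕ Fin ny) ⊕ Fin np) ℝ) :=
  ((clBig G K).toBlocks₁₁).toBlocks₁₁

/-- Closed-loop matrix `B_{0,cl}` (`2n × 2np`). -/
def B0cl (G : Plant n np nd ne nu ny)
    (K : Matrix ((Fin n ⊕ Fin nu) ⊕ Fin np) ((Fin n ⊕ Fin ny) ⊕ Fin np) ℝ) :=
  ((clBig G K).toBlocks₁₁).toBlocks₁₂

/-- Closed-loop matrix `B_{1,cl}` (`2n × nd`). -/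
def B1cl (G : Plant n np nd ne nu ny)
    (K : Matrix ((Fin n ⊕ Fin nu) ⊕ Fin np) ((Fin n ⊕ Fin ny) ⊕ Fin np) ℝ) :=
  ((clBig G K).toBlocks₁₂).toRows₁

/-- Closed-loop matrix `C_{0,cl}` (`2np × 2n`). -/
def C0cl (G : Plant n np nd ne nu ny)
    (K : Matrix ((Fin n ⊕ Fin nu) ⊕ Fin np) ((Fin n ⊕ Fin ny) ⊕ Fin np) ℝ) :=
  ((clBig G K).toBlocks₁₁).toBlocks₂₁

/-- Closed-loop matrix `D_{00,cl}` (`2np × 2np`). -/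
def D00cl (G : Plant n np nd ne nu ny)
    (K : Matrix ((Fin n ⊕ Fin nu) ⊕ Fin np) ((Fin n ⊕ Fin ny) ⊕ Fin np) ℝ) :=
  ((clBig G K).toBlocks₁₁).toBlocks₂₂

/-- Closed-loop matrix `D_{01,cl}` (`2np × nd`). -/
def D01cl (G : Plant n np nd ne nu ny)
    (K : Matrix ((Fin n ⊕ Fin nu) ⊕ Fin np) ((Fin n ⊕ Fin ny) ⊕ Fin np) ℝ) :=
  ((clBig G K).toBlocks₁₂).toRows₂

/-- Closed-loop matrix `C_{1,cl}` (`ne × 2n`). -/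
def C1cl (G : Plant n np nd ne nu ny)
    (K : Matrix ((Fin n ⊕ Fin nu) ⊕ Fin np) ((Fin n ⊕ Fin ny) ⊕ Fin np) ℝ) :=
  ((clBig G K).toBlocks₂₁).toCols₁

/-- Closed-loop matrix `D_{10,cl}` (`ne × 2np`). -/
def D10cl (G : Plant n np nd ne nu ny)
    (K : Matrix ((Fin n ⊕ Fin nu) ⊕ Fin np) ((Fin n ⊕ Fin ny) ⊕ Fin np) ℝ) :=
  ((clBig G K).toBlocks₂₁).toCols₂

/-- Closed-loop matrix `D_{11,cl}` (`ne × nd`). -/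
def D11cl (G : Plant n np nd ne nu ny)
    (K : Matrix ((Fin n ⊕ Fin nu) ⊕ Fin np) ((Fin n ⊕ Fin ny) ⊕ Fin np) ℝ) :=
  (clBig G K).toBlocks₂₂

/-- The matrix `Z := [[I, Rᵀ],[0, Mᵀ]]` built from the blocks `Rᵀ, Mᵀ` of `V⁻¹`. -/
noncomputable def Zmat (V : Matrix (Fin n ⊕ Fin n) (Fin n ⊕ Fin n) ℝ) :
    Matrix (Fin n ⊕ Fin n) (Fin n ⊕ Fin n) ℝ :=
  fromBlocks 1 (V⁻¹.toBlocks₁₁) 0 (V⁻¹.toBlocks₂₁)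

/-- The matrix `W₁ := [[L, I],[L₂ᵀ, 0]]` built from the blocks `L, L₂` of `X⁻¹`. -/
noncomputable def W1mat (X : Matrix (Fin np ⊕ Fin np) (Fin np ⊕ Fin np) ℝ) :
    Matrix (Fin np ⊕ Fin np) (Fin np ⊕ Fin np) ℝ :=
  fromBlocks (X⁻¹.toBlocks₁₁) 1 ((X⁻¹.toBlocks₁₂)ᵀ) 0

/-- The transformed controller matrices `K̂`, obtained from the controller matrices `K` via
the congruence-transformation data `S, N, R, M` (blocks of `V`, `V⁻¹`) and `J, J₂, L, L₂`
(blocks of `X`, `X⁻¹`). -/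
noncomputable def KhatOf (G : Plant n np nd ne nu ny)
    (V : Matrix (Fin n ⊕ Fin n) (Fin n ⊕ Fin n) ℝ)
    (X : Matrix (Fin np ⊕ Fin np) (Fin np ⊕ Fin np) ℝ)
    (K : Matrix ((Fin n ⊕ Fin nu) ⊕ Fin np) ((Fin n ⊕ Fin ny) ⊕ Fin np) ℝ) :
    Matrix ((Fin n ⊕ Fin nu) ⊕ Fin np) ((Fin n ⊕ Fin ny) ⊕ Fin np) ℝ :=
  blk33 ((V⁻¹.toBlocks₁₁)ᵀ * G.A * V.toBlocks₁₁) 0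
      ((V⁻¹.toBlocks₁₁)ᵀ * G.B0 * X.toBlocks₁₁)
    0 0 0
    (X⁻¹.toBlocks₁₁ * G.C0 * V.toBlocks₁₁) 0 (X⁻¹.toBlocks₁₁ * G.D00 * X.toBlocks₁₁)
  + blk33 ((V⁻¹.toBlocks₂₁)ᵀ) ((V⁻¹.toBlocks₁₁)ᵀ * G.B2) 0
      0 1 0
      0 (X⁻¹.toBlocks₁₁ * G.D02) (X⁻¹.toBlocks₁₂) * K *
    blk33 (V.toBlocks₂₁) 0 0
      (G.C2 * V.toBlocks₁₁) 1 (G.D20 * X.toBlocks₁₁)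
      0 0 ((X.toBlocks₁₂)ᵀ)

/-!
Both sides are affine in the controller matrices. Write the closed loop as `P + E K F` and the
congruence as `T (P + E K F) U = T P U + (T E) K (F U)` with `T = diag(Zᵀ, W₁ᵀ, I)` and
`U = diag(V Z, X W₁, I)`. Since `V V⁻¹ = I` and `X` is symmetric, these factors have the explicit
block forms `Zᵀ = [[I, 0], [R, M]]`, `V Z = [[S, I], [N, 0]]`, `W₁ᵀ = [[L, L₂], [I, 0]]` and
`X W₁ = [[I, J], [0, J₂ᵀ]]`. With these, a direct block computation (valid for arbitrary blocks)
factors `T E = E' Θ` and `F U = Ψ F'` through the new input and output matrices `E'`, `F'`, and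
gives `T P U = P' + E' Φ F'`. Hence the transformed closed loop is `P' + E' (Φ + Θ K Ψ) F'`,
and `Φ + Θ K Ψ` is exactly `K̂`.
-/

section BlockAlgebra

variable {r₁ r₂ r₃ c₁ c₂ c₃ l m : Type*}

@[simp]
lemma row3_mul [Fintype m] (A₁ : Matrix r₁ m ℝ) (A₂ : Matrix r₂ m ℝ) (A₃ : Matrix r₃ m ℝ)
    (B : Matrix m l ℝ) : row3 A₁ A₂ A₃ * B = row3 (A₁ * B) (A₂ * B) (A₃ * B) := by
  simp [row3, fromRows_mul]

@[simp]
lemma mul_col3 [Fintype m] (B : Matrix l m ℝ) (A₁ : Matrix m c₁ ℝ) (A₂ : Matrix m c₂ ℝ)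
    (A₃ : Matrix m c₃ ℝ) : B * col3 A₁ A₂ A₃ = col3 (B * A₁) (B * A₂) (B * A₃) := by
  simp [col3, mul_fromCols]

@[simp]
lemma col3_mul_row3 [Fintype c₁] [Fintype c₂] [Fintype c₃]
    (A₁ : Matrix l c₁ ℝ) (A₂ : Matrix l c₂ ℝ) (A₃ : Matrix l c₃ ℝ)
    (B₁ : Matrix c₁ m ℝ) (B₂ : Matrix c₂ m ℝ) (B₃ : Matrix c₃ m ℝ) :
    col3 A₁ A₂ A₃ * row3 B₁ B₂ B₃ = A₁ * B₁ + A₂ * B₂ + A₃ * B₃ := by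
  simp [col3, row3, fromCols_mul_fromRows]

@[simp]
lemma col3_add (A₁ B₁ : Matrix l c₁ ℝ) (A₂ B₂ : Matrix l c₂ ℝ) (A₃ B₃ : Matrix l c₃ ℝ) :
    col3 A₁ A₂ A₃ + col3 B₁ B₂ B₃ = col3 (A₁ + B₁) (A₂ + B₂) (A₃ + B₃) := by
  ext i ((j | j) | j) <;> rfl

@[simp]
lemma row3_add (A₁ B₁ : Matrix r₁ m ℝ) (A₂ B₂ : Matrix r₂ m ℝ) (A₃ B₃ : Matrix r₃ m ℝ) :
    row3 A₁ A₂ A₃ + row3 B₁ B₂ B₃ = row3 (A₁ + B₁) (A₂ + B₂) (A₃ + B₃) := by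
  ext ((i | i) | i) j <;> rfl

end BlockAlgebra

section BlockDiag

variable {r₁ r₂ r₃ c₁ c₂ c₃ : Type*}

def blockDiag3 (A : Matrix r₁ r₁ ℝ) (B : Matrix r₂ r₂ ℝ) (C : Matrix r₃ r₃ ℝ) :
    Matrix ((r₁ ⊕ r₂) ⊕ r₃) ((r₁ ⊕ r₂) ⊕ r₃) ℝ :=
  blk33 A 0 0 0 B 0 0 0 C

lemma blk33_toBlocks (M : Matrix ((r₁ ⊕ r₂) ⊕ r₃) ((c₁ ⊕ c₂) ⊕ c₃) ℝ) :
    blk33 M.toBlocks₁₁.toBlocks₁₁ M.toBlocks₁₁.toBlocks₁₂ M.toBlocks₁₂.toRows₁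
      M.toBlocks₁₁.toBlocks₂₁ M.toBlocks₁₁.toBlocks₂₂ M.toBlocks₁₂.toRows₂
      M.toBlocks₂₁.toCols₁ M.toBlocks₂₁.toCols₂ M.toBlocks₂₂ = M := by
  ext ((i | i) | i) ((j | j) | j) <;> rfl

variable [Fintype r₁] [Fintype r₂] [Fintype r₃] [Fintype c₁] [Fintype c₂] [Fintype c₃]
  [DecidableEq r₃] [DecidableEq c₃]

lemma blockDiag3_mul_blk33_mul_blockDiag3 (T₁ : Matrix r₁ r₁ ℝ) (T₂ : Matrix r₂ r₂ ℝ)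
    (U₁ : Matrix c₁ c₁ ℝ) (U₂ : Matrix c₂ c₂ ℝ)
    (M₁₁ : Matrix r₁ c₁ ℝ) (M₁₂ : Matrix r₁ c₂ ℝ) (M₁₃ : Matrix r₁ c₃ ℝ)
    (M₂₁ : Matrix r₂ c₁ ℝ) (M₂₂ : Matrix r₂ c₂ ℝ) (M₂₃ : Matrix r₂ c₃ ℝ)
    (M₃₁ : Matrix r₃ c₁ ℝ) (M₃₂ : Matrix r₃ c₂ ℝ) (M₃₃ : Matrix r₃ c₃ ℝ) :
    blockDiag3 T₁ T₂ (1 : Matrix r₃ r₃ ℝ) * blk33 M₁₁ M₁₂ M₁₃ M₂₁ M₂₂ M₂₃ M₃₁ M₃₂ M₃₃ *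
        blockDiag3 U₁ U₂ (1 : Matrix c₃ c₃ ℝ) =
      blk33 (T₁ * M₁₁ * U₁) (T₁ * M₁₂ * U₂) (T₁ * M₁₃) (T₂ * M₂₁ * U₁) (T₂ * M₂₂ * U₂)
        (T₂ * M₂₃) (M₃₁ * U₁) (M₃₂ * U₂) M₃₃ := by
  simp [blockDiag3, blk33]

end BlockDiag

namespace Plant

variable (G : Plant n np nd ne nu ny)

def openLoop : Matrix (((Fin n ⊕ Fin n) ⊕ (Fin np ⊕ Fin np)) ⊕ Fin ne)
    (((Fin n ⊕ Fin n) ⊕ (Fin np ⊕ Fin np)) ⊕ Fin nd) ℝ :=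
  blk33 (fromBlocks G.A 0 0 0) (fromBlocks G.B0 0 0 0) (fromRows G.B1 0)
    (fromBlocks G.C0 0 0 0) (fromBlocks G.D00 0 0 0) 0
    (fromCols G.C1 0) (fromCols G.D10 0) 0

def ctrlIn : Matrix (((Fin n ⊕ Fin n) ⊕ (Fin np ⊕ Fin np)) ⊕ Fin ne)
    ((Fin n ⊕ Fin nu) ⊕ Fin np) ℝ :=
  row3 (fromRows (col3 0 G.B2 0) (col3 1 0 0)) (fromRows (col3 0 G.D02 0) (col3 0 0 1))
    (col3 0 G.D12 0)

def ctrlOut : Matrix ((Fin n ⊕ Fin ny) ⊕ Fin np)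
    (((Fin n ⊕ Fin n) ⊕ (Fin np ⊕ Fin np)) ⊕ Fin nd) ℝ :=
  col3 (fromCols (row3 0 G.C2 0) (row3 1 0 0)) (fromCols (row3 0 G.D20 0) (row3 0 0 1))
    (row3 0 G.D21 0)

lemma clBig_eq (K : Matrix ((Fin n ⊕ Fin nu) ⊕ Fin np) ((Fin n ⊕ Fin ny) ⊕ Fin np) ℝ) :
    clBig G K = G.openLoop + G.ctrlIn * K * G.ctrlOut :=
  rfl

/- `P'`, `E'`, `F'` and `Φ`, `Θ`, `Ψ` of the proof idea, in terms of the paper's blocks `S, N`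
of `V`, `R, M` (transposed blocks of `V⁻¹`), `J, J₂` of `X` and `L, L₂` of `X⁻¹`. -/
variable (S N R M : Matrix (Fin n) (Fin n) ℝ) (J J₂ L L₂ : Matrix (Fin np) (Fin np) ℝ)

def congrOpenLoop : Matrix (((Fin n ⊕ Fin n) ⊕ (Fin np ⊕ Fin np)) ⊕ Fin ne)
    (((Fin n ⊕ Fin n) ⊕ (Fin np ⊕ Fin np)) ⊕ Fin nd) ℝ :=
  blk33 (fromBlocks (G.A * S) G.A 0 (R * G.A)) (fromBlocks G.B0 (G.B0 * J) (R * G.B0) 0)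
    (fromRows G.B1 (R * G.B1))
    (fromBlocks 0 (L * G.C0) (G.C0 * S) G.C0) (fromBlocks (L * G.D00) 0 G.D00 (G.D00 * J)) 0
    (fromCols (G.C1 * S) G.C1) (fromCols G.D10 (G.D10 * J)) 0

def congrCtrlIn : Matrix (((Fin n ⊕ Fin n) ⊕ (Fin np ⊕ Fin np)) ⊕ Fin ne)
    ((Fin n ⊕ Fin nu) ⊕ Fin np) ℝ :=
  row3 (fromRows (col3 0 G.B2 0) (col3 1 0 0)) (fromRows (col3 0 0 1) (col3 0 G.D02 0))
    (col3 0 G.D12 0)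

def congrCtrlOut : Matrix ((Fin n ⊕ Fin ny) ⊕ Fin np)
    (((Fin n ⊕ Fin n) ⊕ (Fin np ⊕ Fin np)) ⊕ Fin nd) ℝ :=
  col3 (fromCols (row3 1 0 0) (row3 0 G.C2 0)) (fromCols (row3 0 G.D20 0) (row3 0 0 1))
    (row3 0 G.D21 0)

def khatConst : Matrix ((Fin n ⊕ Fin nu) ⊕ Fin np) ((Fin n ⊕ Fin ny) ⊕ Fin np) ℝ :=
  blk33 (R * G.A * S) 0 (R * G.B0 * J) 0 0 0 (L * G.C0 * S) 0 (L * G.D00 * J)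

def khatLeft : Matrix ((Fin n ⊕ Fin nu) ⊕ Fin np) ((Fin n ⊕ Fin nu) ⊕ Fin np) ℝ :=
  blk33 M (R * G.B2) 0 0 1 0 0 (L * G.D02) L₂

def khatRight : Matrix ((Fin n ⊕ Fin ny) ⊕ Fin np) ((Fin n ⊕ Fin ny) ⊕ Fin np) ℝ :=
  blk33 N 0 0 (G.C2 * S) 1 (G.D20 * J) 0 0 J₂ᵀ

lemma blockDiag3_mul_ctrlIn :
    blockDiag3 (fromBlocks 1 0 R M) (fromBlocks L L₂ 1 0) (1 : Matrix (Fin ne) (Fin ne) ℝ) *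
      G.ctrlIn = G.congrCtrlIn * G.khatLeft R M L L₂ := by
  simp [ctrlIn, congrCtrlIn, khatLeft, blockDiag3, blk33, fromBlocks_mul_fromRows, fromRows_mul]

lemma ctrlOut_mul_blockDiag3 :
    G.ctrlOut * blockDiag3 (fromBlocks S 1 N 0) (fromBlocks 1 J 0 J₂ᵀ)
      (1 : Matrix (Fin nd) (Fin nd) ℝ) = G.khatRight S N J J₂ * G.congrCtrlOut := by
  simp [ctrlOut, congrCtrlOut, khatRight, blockDiag3, blk33, fromCols_mul_fromBlocks,
    mul_fromCols]

lemma blockDiag3_mul_openLoop_mul_blockDiag3 :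
    blockDiag3 (fromBlocks 1 0 R M) (fromBlocks L L₂ 1 0) (1 : Matrix (Fin ne) (Fin ne) ℝ) *
      G.openLoop * blockDiag3 (fromBlocks S 1 N 0) (fromBlocks 1 J 0 J₂ᵀ)
      (1 : Matrix (Fin nd) (Fin nd) ℝ) =
    G.congrOpenLoop S R J L + G.congrCtrlIn * G.khatConst S R J L * G.congrCtrlOut := by
  simp only [openLoop, congrOpenLoop, congrCtrlIn, congrCtrlOut, khatConst, blockDiag3, blk33]
  ext ((((i | i) | (i | i)) | i)) ((((j | j) | (j | j)) | j)) <;>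
    simp [row3, col3, fromBlocks_multiply, fromBlocks_mul_fromRows, fromCols_mul_fromBlocks,
      fromRows_mul, mul_fromCols, fromCols_mul_fromRows]

theorem blockDiag3_mul_clBig_mul_blockDiag3
    (K : Matrix ((Fin n ⊕ Fin nu) ⊕ Fin np) ((Fin n ⊕ Fin ny) ⊕ Fin np) ℝ) :
    blockDiag3 (fromBlocks 1 0 R M) (fromBlocks L L₂ 1 0) (1 : Matrix (Fin ne) (Fin ne) ℝ) *
      clBig G K * blockDiag3 (fromBlocks S 1 N 0) (fromBlocks 1 J 0 J₂ᵀ)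
      (1 : Matrix (Fin nd) (Fin nd) ℝ) =
    G.congrOpenLoop S R J L + G.congrCtrlIn *
      (G.khatConst S R J L + G.khatLeft R M L L₂ * K * G.khatRight S N J J₂) * G.congrCtrlOut := by
  set T := blockDiag3 (fromBlocks 1 0 R M) (fromBlocks L L₂ 1 0)
    (1 : Matrix (Fin ne) (Fin ne) ℝ)
  set U := blockDiag3 (fromBlocks S 1 N 0) (fromBlocks 1 J 0 J₂ᵀ)
    (1 : Matrix (Fin nd) (Fin nd) ℝ)
  calc T * clBig G K * U = T * G.openLoop * U + T * G.ctrlIn * K * (G.ctrlOut * U) := by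
        simp only [clBig_eq, Matrix.mul_add, Matrix.add_mul, Matrix.mul_assoc]
    _ = G.congrOpenLoop S R J L + G.congrCtrlIn * G.khatConst S R J L * G.congrCtrlOut +
          G.congrCtrlIn * G.khatLeft R M L L₂ * K * (G.khatRight S N J J₂ * G.congrCtrlOut) := by
        rw [blockDiag3_mul_openLoop_mul_blockDiag3, blockDiag3_mul_ctrlIn,
          ctrlOut_mul_blockDiag3]
    _ = _ := by simp only [Matrix.mul_add, Matrix.add_mul, Matrix.mul_assoc, add_assoc]

end Plant

section BlockInverse

variable {m l α : Type*} [Fintype m] [Fintype l] [DecidableEq m] [DecidableEq l] [CommRing α]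

lemma toBlocks_mul_toBlocks_of_mul_eq_one {V W : Matrix (m ⊕ l) (m ⊕ l) α}
    (h : V * W = 1) :
    V.toBlocks₁₁ * W.toBlocks₁₁ + V.toBlocks₁₂ * W.toBlocks₂₁ = 1 ∧
      V.toBlocks₂₁ * W.toBlocks₁₁ + V.toBlocks₂₂ * W.toBlocks₂₁ = 0 := by
  rw [← fromBlocks_toBlocks V, ← fromBlocks_toBlocks W, fromBlocks_multiply, ← fromBlocks_one,
    fromBlocks_inj] at h
  simpa using ⟨h.1, h.2.2.1⟩

lemma mul_fromBlocks_one_toBlocks_of_mul_eq_one {V W : Matrix (m ⊕ l) (m ⊕ l) α}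
    (h : V * W = 1) :
    V * fromBlocks 1 W.toBlocks₁₁ 0 W.toBlocks₂₁ = fromBlocks V.toBlocks₁₁ 1 V.toBlocks₂₁ 0 := by
  obtain ⟨h₁₁, h₂₁⟩ := toBlocks_mul_toBlocks_of_mul_eq_one h
  conv_lhs => rw [← fromBlocks_toBlocks V]
  simp [fromBlocks_multiply, h₁₁, h₂₁]

lemma mul_fromBlocks_toBlocks_one_of_mul_eq_one {V W : Matrix (m ⊕ l) (m ⊕ l) α}
    (h : V * W = 1) :
    V * fromBlocks W.toBlocks₁₁ 1 W.toBlocks₂₁ 0 = fromBlocks 1 V.toBlocks₁₁ 0 V.toBlocks₂₁ := by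
  obtain ⟨h₁₁, h₂₁⟩ := toBlocks_mul_toBlocks_of_mul_eq_one h
  conv_lhs => rw [← fromBlocks_toBlocks V]
  simp [fromBlocks_multiply, h₁₁, h₂₁]

end BlockInverse

lemma mul_Zmat {V : Matrix (Fin n ⊕ Fin n) (Fin n ⊕ Fin n) ℝ} (hV : IsUnit V) :
    V * Zmat V = fromBlocks V.toBlocks₁₁ 1 V.toBlocks₂₁ 0 :=
  mul_fromBlocks_one_toBlocks_of_mul_eq_one (mul_nonsing_inv V ((isUnit_iff_isUnit_det V).1 hV))

lemma Zmat_transpose (V : Matrix (Fin n ⊕ Fin n) (Fin n ⊕ Fin n) ℝ) :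
    (Zmat V)ᵀ = fromBlocks 1 0 (V⁻¹.toBlocks₁₁)ᵀ (V⁻¹.toBlocks₂₁)ᵀ := by
  simp [Zmat, fromBlocks_transpose]

lemma mul_W1mat {X : Matrix (Fin np ⊕ Fin np) (Fin np ⊕ Fin np) ℝ} (hX : IsUnit X)
    (hXs : X.IsSymm) : X * W1mat X = fromBlocks 1 X.toBlocks₁₁ 0 X.toBlocks₁₂ᵀ := by
  obtain ⟨-, hJ₂, -, -⟩ := isSymm_fromBlocks_iff.1 ((fromBlocks_toBlocks X).symm ▸ hXs)
  obtain ⟨-, hL₂, -, -⟩ := isSymm_fromBlocks_iff.1 ((fromBlocks_toBlocks X⁻¹).symm ▸ hXs.inv)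
  rw [W1mat, hL₂, hJ₂]
  exact mul_fromBlocks_toBlocks_one_of_mul_eq_one
    (mul_nonsing_inv X ((isUnit_iff_isUnit_det X).1 hX))

lemma W1mat_transpose {X : Matrix (Fin np ⊕ Fin np) (Fin np ⊕ Fin np) ℝ} (hXs : X.IsSymm) :
    (W1mat X)ᵀ = fromBlocks X⁻¹.toBlocks₁₁ X⁻¹.toBlocks₁₂ 1 0 := by
  obtain ⟨hL, -, -, -⟩ := isSymm_fromBlocks_iff.1 ((fromBlocks_toBlocks X⁻¹).symm ▸ hXs.inv)
  simp [W1mat, fromBlocks_transpose, hL.eq]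

/-- For invertible `V`, invertible symmetric `X`, and controller matrices `K`, the congruence
transformation of the closed-loop system by `diag(Z, W₁, I)` and `diag(V·Z, X·W₁, I)` equals
the affine expression of the closed-loop data in the transformed controller matrices `K̂`. -/
theorem statement13 (G : Plant n np nd ne nu ny)
    (V : Matrix (Fin n ⊕ Fin n) (Fin n ⊕ Fin n) ℝ)
    (X : Matrix (Fin np ⊕ Fin np) (Fin np ⊕ Fin np) ℝ)
    (hV : IsUnit V) (hX : IsUnit X) (hXsym : X.IsHermitian)
    (Ak : Matrix (Fin n) (Fin n) ℝ) (Bk1 : Matrix (Fin n) (Fin ny) ℝ)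
    (Bk0 : Matrix (Fin n) (Fin np) ℝ) (Ck1 : Matrix (Fin nu) (Fin n) ℝ)
    (Dk10 : Matrix (Fin nu) (Fin np) ℝ) (Ck0 : Matrix (Fin np) (Fin n) ℝ)
    (Dk00 : Matrix (Fin np) (Fin np) ℝ) :
    blk33
      ((Zmat V)ᵀ * Acl G (ctrlMat Ak Bk1 Bk0 Ck1 Dk10 Ck0 Dk00) * (V * Zmat V))
      ((Zmat V)ᵀ * B0cl G (ctrlMat Ak Bk1 Bk0 Ck1 Dk10 Ck0 Dk00) * (X * W1mat X))
      ((Zmat V)ᵀ * B1cl G (ctrlMat Ak Bk1 Bk0 Ck1 Dk10 Ck0 Dk00))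
      ((W1mat X)ᵀ * C0cl G (ctrlMat Ak Bk1 Bk0 Ck1 Dk10 Ck0 Dk00) * (V * Zmat V))
      ((W1mat X)ᵀ * D00cl G (ctrlMat Ak Bk1 Bk0 Ck1 Dk10 Ck0 Dk00) * (X * W1mat X))
      ((W1mat X)ᵀ * D01cl G (ctrlMat Ak Bk1 Bk0 Ck1 Dk10 Ck0 Dk00))
      (C1cl G (ctrlMat Ak Bk1 Bk0 Ck1 Dk10 Ck0 Dk00) * (V * Zmat V))
      (D10cl G (ctrlMat Ak Bk1 Bk0 Ck1 Dk10 Ck0 Dk00) * (X * W1mat X))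
      (D11cl G (ctrlMat Ak Bk1 Bk0 Ck1 Dk10 Ck0 Dk00)) =
    blk33
      (fromBlocks (G.A * V.toBlocks₁₁) G.A 0 ((V⁻¹.toBlocks₁₁)ᵀ * G.A))
      (fromBlocks G.B0 (G.B0 * X.toBlocks₁₁) ((V⁻¹.toBlocks₁₁)ᵀ * G.B0) 0)
      (fromRows G.B1 ((V⁻¹.toBlocks₁₁)ᵀ * G.B1))
      (fromBlocks 0 (X⁻¹.toBlocks₁₁ * G.C0) (G.C0 * V.toBlocks₁₁) G.C0)
      (fromBlocks (X⁻¹.toBlocks₁₁ * G.D00) 0 G.D00 (G.D00 * X.toBlocks₁₁))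
      0
      (fromCols (G.C1 * V.toBlocks₁₁) G.C1)
      (fromCols G.D10 (G.D10 * X.toBlocks₁₁))
      0
    + row3 (fromRows (col3 0 G.B2 0) (col3 (1 : Matrix (Fin n) (Fin n) ℝ) 0 0))
        (fromRows (col3 0 0 (1 : Matrix (Fin np) (Fin np) ℝ)) (col3 0 G.D02 0))
        (col3 0 G.D12 0) *
      KhatOf G V X (ctrlMat Ak Bk1 Bk0 Ck1 Dk10 Ck0 Dk00) *
      col3 (fromCols (row3 1 0 0) (row3 0 G.C2 0))
        (fromCols (row3 0 G.D20 0) (row3 0 0 1))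
        (row3 0 G.D21 0) := by
  have hXs : X.IsSymm := isHermitian_iff_isSymm.1 hXsym
  set K := ctrlMat Ak Bk1 Bk0 Ck1 Dk10 Ck0 Dk00
  calc _ = blockDiag3 (Zmat V)ᵀ (W1mat X)ᵀ (1 : Matrix (Fin ne) (Fin ne) ℝ) * clBig G K *
        blockDiag3 (V * Zmat V) (X * W1mat X) (1 : Matrix (Fin nd) (Fin nd) ℝ) := by
        rw [← blk33_toBlocks (clBig G K), blockDiag3_mul_blk33_mul_blockDiag3]
        rfl
    _ = _ := by
        rw [Zmat_transpose, W1mat_transpose hXs, mul_Zmat hV, mul_W1mat hX hXs]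
        -- `KhatOf` unfolds to `khatConst + khatLeft * K * khatRight`
        exact G.blockDiag3_mul_clBig_mul_blockDiag3 _ _ _ _ _ _ _ _ K
end
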